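/- Let (α,θ_α): X/G → Y/H and (β,θ_β): Y/H → X/G be 1-cells, and let ρ: X → G and λ: Y → H be maps such that: x = ρ_x•β(α(x)) and ρ_{g•x}·θ_{β,α(x)}(θ_{α,x}(g))·ρ_x⁻¹ = g for all x ∈ X and g ∈ G; y = λ_y•α(β(y)) and λ_{h•y}·θ_{α,β(y)}(θ_{β,y}(h))·λ_y⁻¹ = h for all y ∈ Y and h ∈ H; and θ_{α,β(α(x))}(ρ_x) = λ_{α(x)} for all x ∈ X and ρ_{β(y)} = θ_{β,α(β(y))}(λ_y) for all y ∈ Y. Then (α,θ_α) is stab-surjective. -/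

import Mathlib

/-!
Essential surjectivity comes from the unit `y = λ_y • α(β y)`. For fullness, if
`α x' = k • α x` then `g = ρ_{x'} · θ_β(k) · ρ_x⁻¹` moves `x` to `x'` through `β(α x)` and
`β(α x')`; expanding `θ_α(g)` with the cocycle identity, the triangle identity turns the outer
factors into `λ_{α x'}` and `λ_{α x}⁻¹`, and naturality of `λ` turns the product into `k`.
-/

section

variable {G H X : Type*} [Group G] [Group H] [MulAction G X]

/-- A functor from the action groupoid `X // G` to `H`, seen as a one-object groupoid. -/
def IsActionCocycle (θ : X → G → H) : Prop :=
  ∀ (x : X) (g g' : G), θ x (g * g') = θ (g' • x) g * θ x g'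

namespace IsActionCocycle

variable {θ : X → G → H}

theorem map_one (hθ : IsActionCocycle θ) (x : X) : θ x 1 = 1 := by
  have h := hθ x 1 1
  rw [one_smul, mul_one] at h
  exact right_eq_mul.mp h

theorem map_inv (hθ : IsActionCocycle θ) (x : X) (g : G) :
    θ x g⁻¹ = (θ (g⁻¹ • x) g)⁻¹ := by
  have h := hθ x g g⁻¹
  rw [mul_inv_cancel, hθ.map_one] at h
  exact eq_inv_of_mul_eq_one_right h.symm

theorem map_mul_mul (hθ : IsActionCocycle θ) (x : X) (a b c : G) :
    θ x (a * b * c) = θ ((b * c) • x) a * θ (c • x) b * θ x c := by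
  rw [hθ x (a * b) c, hθ (c • x) a b, mul_smul]

end IsActionCocycle

end

theorem exists_smul_eq_cocycle_eq_of_map_eq_smul
    {G H X Y : Type*} [Group G] [Group H] [MulAction G X] [MulAction H Y]
    {α : X → Y} {θα : X → G → H} {β : Y → X} {θβ : Y → H → G} {ρ : X → G} {lam : Y → H}
    (hα : IsActionCocycle θα) (hβ : ∀ (y : Y) (h : H), β (h • y) = θβ y h • β y)
    (hρ : ∀ x : X, x = ρ x • β (α x))
    (hlam : ∀ (y : Y) (h : H), lam (h • y) * θα (β y) (θβ y h) * (lam y)⁻¹ = h)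
    (htri : ∀ x : X, θα (β (α x)) (ρ x) = lam (α x))
    {x x' : X} {k : H} (hk : α x' = k • α x) :
    ∃ g : G, x' = g • x ∧ θα x g = k := by
  have hβα : (ρ x)⁻¹ • x = β (α x) := inv_smul_eq_iff.mpr (hρ x)
  have hβk : θβ (α x) k • β (α x) = β (α x') := by rw [← hβ, hk]
  refine ⟨ρ x' * θβ (α x) k * (ρ x)⁻¹, ?_, ?_⟩
  · rw [mul_smul, mul_smul, hβα, hβk]
    exact hρ x'
  · rw [hα.map_mul_mul, mul_smul, hβα, hβk, htri, hα.map_inv, hβα, htri, hk]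
    exact hlam (α x) k

theorem adjoint_equivalence_is_stab_surjective_general
    (G H : Type*) [Group G] [Group H]
    (X Y : Type*)
    [MulAction G X] [MulAction H Y]
    (α : X → Y) (θα : X → G → H)
    (hα2 : ∀ (x : X) (g g' : G), θα x (g * g') = θα (g' • x) g * θα x g')
    (β : Y → X) (θβ : Y → H → G)
    (hβ1 : ∀ (y : Y) (h : H), β (h • y) = θβ y h • β y)
    (ρ : X → G) (lam : Y → H)
    (hρ1 : ∀ x : X, x = ρ x • β (α x))
    (hlam1 : ∀ y : Y, y = lam y • α (β y))
    (hlam2 : ∀ (y : Y) (h : H), lam (h • y) * θα (β y) (θβ y h) * (lam y)⁻¹ = h)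
    (htri1 : ∀ x : X, θα (β (α x)) (ρ x) = lam (α x)) :
    (∀ y : Y, ∃ (x : X) (h : H), y = h • α x) ∧
    (∀ (x x' : X) (h h' : H), h • α x = h' • α x' →
      ∃ g : G, x' = g • x ∧ h = h' * θα x g) := by
  refine ⟨fun y => ⟨β y, lam y, hlam1 y⟩, fun x x' h h' heq => ?_⟩
  have hk : α x' = (h'⁻¹ * h) • α x := by rw [mul_smul, heq, inv_smul_smul]
  obtain ⟨g, hgx, hgθ⟩ := exists_smul_eq_cocycle_eq_of_map_eq_smul hα2 hβ1 hρ1 hlam2 htri1 hk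
  exact ⟨g, hgx, by rw [hgθ, mul_inv_cancel_left]⟩

/-- Every adjoint equivalence in 𝕊 is stab-surjective. -/
theorem adjoint_equivalence_is_stab_surjective
    (G H : Type*) [Group G] [Group H] [Finite G] [Finite H]
    (X Y : Type*) [Finite X] [Finite Y]
    [MulAction G X] [MulAction H Y]
    (α : X → Y) (θα : X → G → H)
    (hα1 : ∀ (x : X) (g : G), α (g • x) = θα x g • α x)
    (hα2 : ∀ (x : X) (g g' : G), θα x (g * g') = θα (g' • x) g * θα x g')
    (β : Y → X) (θβ : Y → H → G)
    (hβ1 : ∀ (y : Y) (h : H), β (h • y) = θβ y h • β y)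
    (hβ2 : ∀ (y : Y) (h h' : H), θβ y (h * h') = θβ (h' • y) h * θβ y h')
    (ρ : X → G) (lam : Y → H)
    (hρ1 : ∀ x : X, x = ρ x • β (α x))
    (hρ2 : ∀ (x : X) (g : G), ρ (g • x) * θβ (α x) (θα x g) * (ρ x)⁻¹ = g)
    (hlam1 : ∀ y : Y, y = lam y • α (β y))
    (hlam2 : ∀ (y : Y) (h : H), lam (h • y) * θα (β y) (θβ y h) * (lam y)⁻¹ = h)
    (htri1 : ∀ x : X, θα (β (α x)) (ρ x) = lam (α x))
    (htri2 : ∀ y : Y, ρ (β y) = θβ (α (β y)) (lam y)) :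
    (∀ y : Y, ∃ (x : X) (h : H), y = h • α x) ∧
    (∀ (x x' : X) (h h' : H), h • α x = h' • α x' →
      ∃ g : G, x' = g • x ∧ h = h' * θα x g) :=
  adjoint_equivalence_is_stab_surjective_general G H X Y α θα hα2 β θβ hβ1 ρ lam hρ1 hlam1 hlam2
    htri1
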